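/- Let c_1, …, c_{2n−1} be defined by the recursion c_{2k} = −c_{2k−1} · k2*(a_{2k−1}, b_{2k−1})/k2*(a_{2k}, b_{2k}) and c_{2k+1} = −c_{2k} · k1*(a_{2k}, b_{2k})/k1*(a_{2k+1}, b_{2k+1}), where k1*(x,y) = x − r1 y, k2*(x,y) = −r2 x + y, and the points satisfy b_{2k} = b_{2k+1}, a_{2k−1} = a_{2k}, k1*(a_1, b_1) = 0, and k2*(a_{2n−1}, b_{2n−1}) = 0. Then f(u,v) = Σ_{k=1}^{2n−1} c_k exp(a_k u + b_k v) satisfies the oblique Neumann boundary conditions: (R¹·∇)f(0, v) = 0 for all v ≥ 0 and (R²·∇)f(u, 0) = 0 for all u ≥ 0, with R¹ = (1, −r1), R² = (−r2, 1). -/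

import Mathlib

private lemma deriv_sum_exp_left (s : Finset ℕ) (c a d : ℕ → ℝ) (x : ℝ) :
    deriv (fun u => ∑ k ∈ s, c k * Real.exp (a k * u + d k)) x
      = ∑ k ∈ s, c k * a k * Real.exp (a k * x + d k) := by
  have h : HasDerivAt (fun u => ∑ k ∈ s, c k * Real.exp (a k * u + d k))
      (∑ k ∈ s, c k * a k * Real.exp (a k * x + d k)) x := by
    apply HasDerivAt.fun_sum
    intro k _
    have h1 : HasDerivAt (fun u : ℝ => a k * u + d k) (a k) x := by
      simpa using ((hasDerivAt_id x).const_mul (a k)).add_const (d k)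
    have h2 := (h1.exp).const_mul (c k)
    convert h2 using 1
    · rfl
    ring
  exact h.deriv

private lemma deriv_sum_exp_right (s : Finset ℕ) (c a d : ℕ → ℝ) (x : ℝ) :
    deriv (fun u => ∑ k ∈ s, c k * Real.exp (d k + a k * u)) x
      = ∑ k ∈ s, c k * a k * Real.exp (d k + a k * x) := by
  have h : HasDerivAt (fun u => ∑ k ∈ s, c k * Real.exp (d k + a k * u))
      (∑ k ∈ s, c k * a k * Real.exp (d k + a k * x)) x := by
    apply HasDerivAt.fun_sum
    intro k _
    have h1 : HasDerivAt (fun u : ℝ => d k + a k * u) (a k) x := by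
      simpa using (((hasDerivAt_id x).const_mul (a k)).const_add (d k))
    have h2 := (h1.exp).const_mul (c k)
    convert h2 using 1
    · rfl
    ring
  exact h.deriv

private lemma sum_split_odd (n : ℕ) (hn : 1 ≤ n) (f : ℕ → ℝ) :
    ∑ k ∈ Finset.Icc 1 (2 * n - 1), f k
      = f 1 + ∑ j ∈ Finset.Icc 1 (n - 1), (f (2 * j) + f (2 * j + 1)) := by
  induction n with
  | zero => omega
  | succ m ih =>
    rcases Nat.eq_or_lt_of_le hn with h | h
    · simp [← h]
    · have hm : 1 ≤ m := by omega
      have h1 : 2 * (m + 1) - 1 = (2 * m - 1) + 1 + 1 := by omega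
      have h2 : (m + 1) - 1 = (m - 1) + 1 := by omega
      rw [h1, Finset.sum_Icc_succ_top (by omega), Finset.sum_Icc_succ_top (by omega),
        ih hm, h2, Finset.sum_Icc_succ_top (by omega)]
      have e1 : 2 * ((m - 1) + 1) = 2 * m - 1 + 1 := by omega
      rw [e1]
      ring

private lemma sum_split_even (n : ℕ) (hn : 1 ≤ n) (f : ℕ → ℝ) :
    ∑ k ∈ Finset.Icc 1 (2 * n - 1), f k
      = (∑ j ∈ Finset.Icc 1 (n - 1), (f (2 * j - 1) + f (2 * j))) + f (2 * n - 1) := by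
  induction n with
  | zero => omega
  | succ m ih =>
    rcases Nat.eq_or_lt_of_le hn with h | h
    · simp [← h]
    · have hm : 1 ≤ m := by omega
      have h1 : 2 * (m + 1) - 1 = (2 * m - 1) + 1 + 1 := by omega
      have h2 : (m + 1) - 1 = (m - 1) + 1 := by omega
      rw [h1, Finset.sum_Icc_succ_top (by omega), Finset.sum_Icc_succ_top (by omega),
        ih hm, h2, Finset.sum_Icc_succ_top (by omega)]
      have e1 : 2 * ((m - 1) + 1) - 1 = 2 * m - 1 := by omega
      have e2 : 2 * ((m - 1) + 1) = 2 * m - 1 + 1 := by omega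
      rw [e1, e2]
      ring

/-- the compensation coefficients c_k make
f(u,v) = Σ_{k=1}^{2n−1} c_k e^{a_k u + b_k v} satisfy the oblique Neumann boundary
conditions ∂_{R¹}f(0,·) = 0 and ∂_{R²}f(·,0) = 0 with R¹ = (1,−r1), R² = (−r2,1). -/
theorem compensation_neumann
    (n : ℕ) (hn : 1 ≤ n) (r1 r2 : ℝ) (a b c : ℕ → ℝ)
    (ha : ∀ k : ℕ, 1 ≤ k → k ≤ n - 1 → a (2 * k - 1) = a (2 * k))
    (hb : ∀ k : ℕ, 1 ≤ k → k ≤ n - 1 → b (2 * k) = b (2 * k + 1))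
    (hden2 : ∀ k : ℕ, 1 ≤ k → k ≤ n - 1 → -r2 * a (2 * k) + b (2 * k) ≠ 0)
    (hden1 : ∀ k : ℕ, 1 ≤ k → k ≤ n - 1 → a (2 * k + 1) - r1 * b (2 * k + 1) ≠ 0)
    (hc2 : ∀ k : ℕ, 1 ≤ k → k ≤ n - 1 →
      c (2 * k) = -c (2 * k - 1) * (-r2 * a (2 * k - 1) + b (2 * k - 1))
          / (-r2 * a (2 * k) + b (2 * k)))
    (hc3 : ∀ k : ℕ, 1 ≤ k → k ≤ n - 1 →
      c (2 * k + 1) = -c (2 * k) * (a (2 * k) - r1 * b (2 * k))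
          / (a (2 * k + 1) - r1 * b (2 * k + 1)))
    (h1 : a 1 - r1 * b 1 = 0)
    (hlast : -r2 * a (2 * n - 1) + b (2 * n - 1) = 0) :
    (∀ v : ℝ, 0 ≤ v →
      deriv (fun u => ∑ k ∈ Finset.Icc 1 (2 * n - 1),
          c k * Real.exp (a k * u + b k * v)) 0
        - r1 * deriv (fun w => ∑ k ∈ Finset.Icc 1 (2 * n - 1),
          c k * Real.exp (a k * 0 + b k * w)) v = 0) ∧
    (∀ u : ℝ, 0 ≤ u →
      -r2 * deriv (fun t => ∑ k ∈ Finset.Icc 1 (2 * n - 1),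
          c k * Real.exp (a k * t + b k * 0)) u
        + deriv (fun w => ∑ k ∈ Finset.Icc 1 (2 * n - 1),
          c k * Real.exp (a k * u + b k * w)) 0 = 0) := by
  constructor
  · intro v _
    rw [deriv_sum_exp_left (Finset.Icc 1 (2 * n - 1)) c a (fun k => b k * v) 0]
    rw [deriv_sum_exp_right (Finset.Icc 1 (2 * n - 1)) c b (fun k => a k * 0) v]
    rw [Finset.mul_sum, ← Finset.sum_sub_distrib]
    rw [sum_split_odd n hn]
    have hterm1 : c 1 * a 1 * Real.exp (a 1 * 0 + b 1 * v)
        - r1 * (c 1 * b 1 * Real.exp (a 1 * 0 + b 1 * v)) = 0 := by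
      have : a 1 = r1 * b 1 := by linarith
      rw [this]; ring
    rw [hterm1, zero_add]
    apply Finset.sum_eq_zero
    intro j hj
    simp only [Finset.mem_Icc] at hj
    have hbj := hb j hj.1 hj.2
    have hdj := hden1 j hj.1 hj.2
    have hcj := hc3 j hj.1 hj.2
    have key : c (2 * j + 1) * (a (2 * j + 1) - r1 * b (2 * j + 1))
        = -c (2 * j) * (a (2 * j) - r1 * b (2 * j)) := by
      rw [hcj, div_mul_cancel₀ _ hdj]
    rw [hbj] at key ⊢
    simp only [mul_zero, zero_add]
    linear_combination Real.exp (b (2 * j + 1) * v) * key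
  · intro u _
    rw [deriv_sum_exp_left (Finset.Icc 1 (2 * n - 1)) c a (fun k => b k * 0) u]
    rw [deriv_sum_exp_right (Finset.Icc 1 (2 * n - 1)) c b (fun k => a k * u) 0]
    rw [Finset.mul_sum, ← Finset.sum_add_distrib]
    rw [sum_split_even n hn]
    have hterml : -r2 * (c (2 * n - 1) * a (2 * n - 1) * Real.exp (a (2 * n - 1) * u + b (2 * n - 1) * 0))
        + c (2 * n - 1) * b (2 * n - 1) * Real.exp (a (2 * n - 1) * u + b (2 * n - 1) * 0) = 0 := by
      have : b (2 * n - 1) = r2 * a (2 * n - 1) := by linarith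
      rw [this]; ring
    rw [hterml, add_zero]
    apply Finset.sum_eq_zero
    intro j hj
    simp only [Finset.mem_Icc] at hj
    have haj := ha j hj.1 hj.2
    have hdj := hden2 j hj.1 hj.2
    have hcj := hc2 j hj.1 hj.2
    have key : c (2 * j) * (-r2 * a (2 * j) + b (2 * j))
        = -c (2 * j - 1) * (-r2 * a (2 * j - 1) + b (2 * j - 1)) := by
      rw [hcj, div_mul_cancel₀ _ hdj]
    rw [haj] at key ⊢
    simp only [mul_zero, add_zero]
    linear_combination Real.exp (a (2 * j) * u) * key
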